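/- Let B be an n×n symmetric positive definite matrix with maximum eigenvalue λ_max, and let s ≠ 0, y satisfy yᵀ s ≥ λ ‖s‖² for some λ > 0. Then the BFGS update B⁺ = B - (B s sᵀ B)/(sᵀ B s) + (y yᵀ)/(yᵀ s) satisfies det(B⁺) ≥ det(B) · λ / λ_max. -/

import Mathlib

open Matrix

/-- BFGS update formula. -/
noncomputable def bfgsUpdate {n : ℕ} (B : Matrix (Fin n) (Fin n) ℝ)
    (s y : Fin n → ℝ) : Matrix (Fin n) (Fin n) ℝ :=
  B - (s ⬝ᵥ B.mulVec s)⁻¹ • (B * vecMulVec s s * B) + (y ⬝ᵥ s)⁻¹ • vecMulVec y y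

/-!
With `u = B s`, the update is `B - uuᵀ/(sᵀBs) + yyᵀ/(yᵀs)`, a rank-two perturbation of `B`. The
matrix determinant lemma reduces its determinant to that of a `2 × 2` matrix, which collapses
because `B⁻¹u = s`: `det B⁺ = det B · (yᵀs)/(sᵀBs)`. The bound then follows from
`sᵀBs ≤ λ_max ‖s‖²` and `yᵀs ≥ λ ‖s‖²`.
-/

theorem Matrix.det_add_vecMulVec_add_vecMulVec {m R : Type*} [Fintype m] [DecidableEq m]
    [CommRing R] {A : Matrix m m R} (hA : IsUnit A.det) (a b c d : m → R) :
    (A + vecMulVec a b + vecMulVec c d).det =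
      A.det * !![1 + b ⬝ᵥ A⁻¹ *ᵥ a, b ⬝ᵥ A⁻¹ *ᵥ c; d ⬝ᵥ A⁻¹ *ᵥ a, 1 + d ⬝ᵥ A⁻¹ *ᵥ c].det := by
  have hUV : vecMulVec a b + vecMulVec c d = (of ![a, c])ᵀ * of ![b, d] := by
    ext i j
    simp [mul_apply, Fin.sum_univ_two, vecMulVec_apply]
  have hcore : of ![b, d] * A⁻¹ * (of ![a, c])ᵀ =
      !![b ⬝ᵥ A⁻¹ *ᵥ a, b ⬝ᵥ A⁻¹ *ᵥ c; d ⬝ᵥ A⁻¹ *ᵥ a, d ⬝ᵥ A⁻¹ *ᵥ c] := by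
    ext k l
    fin_cases k <;> fin_cases l <;> simp [mul_apply', dotProduct_mulVec] <;> rfl
  rw [add_assoc, hUV, det_add_mul _ _ hA, hcore, one_fin_two, of_add_of]
  simp

theorem det_bfgsUpdate {n : ℕ} {B : Matrix (Fin n) (Fin n) ℝ} (hB : B.IsSymm)
    (hdet : IsUnit B.det) {s : Fin n → ℝ} (hsBs : s ⬝ᵥ B *ᵥ s ≠ 0) (y : Fin n → ℝ) :
    (bfgsUpdate B s y).det = B.det * (y ⬝ᵥ s) / (s ⬝ᵥ B *ᵥ s) := by
  set u := B *ᵥ s with hu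
  have hrank_one : B * vecMulVec s s * B = vecMulVec u u := by
    rw [mul_vecMulVec, vecMulVec_mul, ← mulVec_transpose, hB.eq]
  have hupdate : bfgsUpdate B s y =
      B + vecMulVec (-(s ⬝ᵥ u)⁻¹ • u) u + vecMulVec ((y ⬝ᵥ s)⁻¹ • y) y := by
    rw [bfgsUpdate, hrank_one, smul_vecMulVec, smul_vecMulVec, neg_smul, ← sub_eq_add_neg]
  have hinv_u : B⁻¹ *ᵥ u = s := by
    rw [hu, mulVec_mulVec, nonsing_inv_mul _ hdet, one_mulVec]
  have hu_inv_y : u ⬝ᵥ B⁻¹ *ᵥ y = y ⬝ᵥ s := by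
    rw [dotProduct_mulVec, ← mulVec_transpose, hB.inv.eq, hinv_u, dotProduct_comm]
  have hus : u ⬝ᵥ s = s ⬝ᵥ u := dotProduct_comm u s
  rw [hupdate, det_add_vecMulVec_add_vecMulVec hdet, det_fin_two_of]
  simp only [mulVec_smul, dotProduct_smul, smul_eq_mul, hinv_u, hu_inv_y, hus]
  rw [neg_mul, inv_mul_cancel₀ hsBs]
  -- `(yᵀs)⁻¹ (yᵀs) (yᵀs) = yᵀs` holds even for `yᵀs = 0`, since `0⁻¹ = 0`.
  linear_combination B.det / (s ⬝ᵥ u) * inv_mul_mul_self (y ⬝ᵥ s)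

theorem bfgs_det_lower_bound {n : ℕ} (B : Matrix (Fin n) (Fin n) ℝ)
    (hB : B.PosDef) (lmax : ℝ)
    (hmax : ∀ v : Fin n → ℝ, v ⬝ᵥ B.mulVec v ≤ lmax * (v ⬝ᵥ v))
    (s y : Fin n → ℝ) (hs : s ≠ 0) (lam : ℝ) (hlam : 0 < lam)
    (hys : lam * (s ⬝ᵥ s) ≤ y ⬝ᵥ s) :
    B.det * lam / lmax ≤ (bfgsUpdate B s y).det := by
  have hsBs : 0 < s ⬝ᵥ B *ᵥ s := by simpa using hB.dotProduct_mulVec_pos hs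
  have hss : 0 < s ⬝ᵥ s := by simpa using dotProduct_self_star_pos_iff.mpr hs
  have hlmax : 0 < lmax := pos_of_mul_pos_left (hsBs.trans_le (hmax s)) hss.le
  rw [det_bfgsUpdate (isHermitian_iff_isSymm.mp hB.isHermitian) hB.det_pos.ne'.isUnit hsBs.ne' y,
    mul_div_assoc, mul_div_assoc]
  refine mul_le_mul_of_nonneg_left ?_ hB.det_pos.le
  rw [div_le_div_iff₀ hlmax hsBs]
  calc lam * (s ⬝ᵥ B *ᵥ s) ≤ lam * (lmax * (s ⬝ᵥ s)) := by gcongr; exact hmax s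
    _ = lmax * (lam * (s ⬝ᵥ s)) := by ring
    _ ≤ lmax * (y ⬝ᵥ s) := by gcongr
    _ = (y ⬝ᵥ s) * lmax := mul_comm _ _
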